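/- arXiv:2409.09437 — 3 statements merged into one kernel-verified Lean document; each statement's English description precedes it below -/
import Mathlib

section
/- Let μ : ℝⁿ → [0,∞) be locally integrable, r > 0, Y = (y,s) ∈ ℝ^{n+1}, and θ ∈ (0,1). Then for every X₀ = (x₀,t₀) in the weighted cylinder C_{(1−θ)r,μ}(Y), the cylinder C_{θr,μ}(X₀) is contained in C_{r,μ}(Y). -/
open MeasureTheory Metric Set Filter

noncomputable section

abbrev En (n : ℕ) := EuclideanSpace ℝ (Fin n)

/-- Lebesgue average of `f` over the ball `B_ρ(x₀)`. -/
def avgB {n : ℕ} (f : En n → ℝ) (x₀ : En n) (ρ : ℝ) : ℝ :=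
  (∫ x in ball x₀ ρ, f x) / (volume (ball x₀ ρ)).toReal

/-- The weighted parabolic cylinder $C_{r,μ}(y,s) = B_r(y) × (s - r²(μ)_{B_r(y)}^{1/n}, s)$. -/
def cylinder {n : ℕ} (μ : En n → ℝ) (y : En n) (s r : ℝ) : Set (En n × ℝ) :=
  (ball y r) ×ˢ (Ioo (s - r ^ 2 * (avgB μ y r) ^ ((1 : ℝ) / n)) s)

/-
The height `ρ² (μ)_{B_ρ(x)}^{1/n}` of a weighted cylinder equals `ρ (μ(B_ρ(x)) / |B_1|)^{1/n}`:
linear in `ρ` times a factor that is monotone in the ball. Since `B_{(1-θ)r}(y)` and `B_{θr}(x₀)`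
both lie in `B_r(y)`, the heights of `C_{(1-θ)r,μ}(Y)` and `C_{θr,μ}(X₀)` add up to at most the
height of `C_{r,μ}(Y)`, which is exactly what the time components need.
-/

section

variable {n : ℕ}

lemma toReal_volume_ball (x : En n) {ρ : ℝ} (hρ : 0 < ρ) :
    (volume (ball x ρ)).toReal = ρ ^ n * (volume (ball (0 : En n) 1)).toReal := by
  rw [Measure.addHaar_ball_of_pos volume x hρ, ENNReal.toReal_mul,
    ENNReal.toReal_ofReal (by positivity), finrank_euclideanSpace, Fintype.card_fin]

lemma sq_mul_avgB_rpow (hn : n ≠ 0) {f : En n → ℝ} (x : En n) {ρ : ℝ} (hρ : 0 < ρ)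
    (hf : 0 ≤ ∫ z in ball x ρ, f z) :
    ρ ^ 2 * avgB f x ρ ^ ((1 : ℝ) / n) =
      ρ * ((∫ z in ball x ρ, f z) / (volume (ball (0 : En n) 1)).toReal) ^ ((1 : ℝ) / n) := by
  have hω : 0 ≤ (volume (ball (0 : En n) 1)).toReal := ENNReal.toReal_nonneg
  have hroot : (ρ ^ n) ^ ((1 : ℝ) / n) = ρ := by
    rw [one_div, Real.pow_rpow_inv_natCast hρ.le hn]
  rw [avgB, toReal_volume_ball x hρ, mul_comm (ρ ^ n), ← div_div,
    Real.div_rpow (div_nonneg hf hω) (by positivity), hroot]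
  field_simp

lemma sq_mul_avgB_rpow_add_le (hn : n ≠ 0) {μ : En n → ℝ} (hμ : ∀ x, 0 ≤ μ x)
    (hμloc : LocallyIntegrable μ) {x₁ x₂ y : En n} {ρ₁ ρ₂ R : ℝ} (hρ₁ : 0 < ρ₁) (hρ₂ : 0 < ρ₂)
    (hR : ρ₁ + ρ₂ ≤ R) (h₁ : ball x₁ ρ₁ ⊆ ball y R) (h₂ : ball x₂ ρ₂ ⊆ ball y R) :
    ρ₁ ^ 2 * avgB μ x₁ ρ₁ ^ ((1 : ℝ) / n) + ρ₂ ^ 2 * avgB μ x₂ ρ₂ ^ ((1 : ℝ) / n) ≤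
      R ^ 2 * avgB μ y R ^ ((1 : ℝ) / n) := by
  have hint : IntegrableOn μ (ball y R) :=
    (hμloc.integrableOn_isCompact (isCompact_closedBall y R)).mono_set ball_subset_closedBall
  set ω := (volume (ball (0 : En n) 1)).toReal
  have hnonneg (B : Set (En n)) : 0 ≤ ∫ z in B, μ z := integral_nonneg hμ
  have hω : 0 ≤ ω := ENNReal.toReal_nonneg
  have hmono {B : Set (En n)} (hB : B ⊆ ball y R) :
      ((∫ z in B, μ z) / ω) ^ ((1 : ℝ) / n) ≤ ((∫ z in ball y R, μ z) / ω) ^ ((1 : ℝ) / n) := by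
    gcongr
    exacts [div_nonneg (hnonneg B) hω, .of_forall hμ]
  rw [sq_mul_avgB_rpow hn x₁ hρ₁ (hnonneg _), sq_mul_avgB_rpow hn x₂ hρ₂ (hnonneg _),
    sq_mul_avgB_rpow hn y (by linarith) (hnonneg _)]
  calc _ ≤ (ρ₁ + ρ₂) * ((∫ z in ball y R, μ z) / ω) ^ ((1 : ℝ) / n) := by
        rw [add_mul]
        exact add_le_add (mul_le_mul_of_nonneg_left (hmono h₁) hρ₁.le)
          (mul_le_mul_of_nonneg_left (hmono h₂) hρ₂.le)
    _ ≤ _ := mul_le_mul_of_nonneg_right hR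
      (Real.rpow_nonneg (div_nonneg (hnonneg _) hω) _)

end

/-- cylinder inclusion: if $X₀ ∈ C_{(1-θ)r,μ}(Y)$ then
$C_{θr,μ}(X₀) ⊆ C_{r,μ}(Y)$. -/
theorem stmt6 {n : ℕ} (hn : 1 ≤ n) (μ : En n → ℝ) (hμ : ∀ x, 0 ≤ μ x)
    (hμloc : LocallyIntegrable μ) (y : En n) (s r : ℝ) (hr : 0 < r)
    (θ : ℝ) (hθ : θ ∈ Ioo (0 : ℝ) 1)
    (X₀ : En n × ℝ) (hX₀ : X₀ ∈ cylinder μ y s ((1 - θ) * r)) :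
    cylinder μ X₀.1 X₀.2 (θ * r) ⊆ cylinder μ y s r := by
  obtain ⟨x₀, t₀⟩ := X₀
  obtain ⟨hx₀, ht₀₁, ht₀₂⟩ := hX₀
  obtain ⟨hθ₀, hθ₁⟩ := hθ
  have hsmall : ball x₀ (θ * r) ⊆ ball y r :=
    ball_subset_ball' (by rw [mem_ball] at hx₀; linarith)
  have hheight := sq_mul_avgB_rpow_add_le (ρ₁ := (1 - θ) * r) (ρ₂ := θ * r) (by omega) hμ hμloc
    (by nlinarith) (by positivity) (by linarith) (ball_subset_ball (by nlinarith)) hsmall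
  rintro ⟨x, t⟩ ⟨hx, ht₁, ht₂⟩
  refine ⟨hsmall hx, ?_, ?_⟩ <;> dsimp only at * <;> linarith
end
end

section
/- The function ρ_ω defined in the context satisfies the quasi-triangle inequality: for every X, Y, Z ∈ ℝ^{n+1}, ρ_ω(X,Z) ≤ 2[ρ_ω(X,Y) + ρ_ω(Y,Z)]. -/
/-!
Put `κ_y(τ) = τ (μ)_{B_τ(y)}^{1/n}`, so that `κ_y(τ)ⁿ |B₁| = μ(B_τ(y))` and `φ_y(τ) = τ κ_y(τ)`.
All the argument uses about `μ` is that `κ_y(σ) ≤ κ_z(τ)` whenever `σ + |y - z| ≤ τ`, and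
`κ_y(τ) > 0` for `τ > 0`. This makes `φ` superadditive, whence
`ψ_z(u + v) ≤ ψ_y(u) + |y - z| + ψ_z(v)`.

Since `ρ_ω(X,Z)² ≤ 2 Θ_Z(X)²`, it suffices to bound `Θ_Z(X)` by `p + q`, where
`p = ρ_ω(X,Y)` and `q = ρ_ω(Y,Z)`; for `t_X ≤ t_Z` this follows from the two facts above
unless `t_X ≤ t_Y ≤ t_Z`. In that case, put `d = |y - z|` and `b = ψ_z(t_Z - t_Y)`, so that
`Θ_Z(X) ≤ p + d + b`. If `b² + d² ≤ q²` this crude bound suffices. Otherwise `b < d` and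
`q² = d² + d (t_Z - t_Y) / κ_z(d)`, and the time term of `ρ_ω(X,Z)` is compared with that
of `ρ_ω(Y,Z)` through `κ_z(d) ≤ κ_z(Θ_Z(X))`.
-/
open MeasureTheory Metric Set Filter

noncomputable section

/-- $μ = ω^{-n}$. -/
def mu {n : ℕ} (ω : En n → ℝ) : En n → ℝ := fun x => ω x ^ (-(n : ℝ))

/-- $φ_y(τ) = τ²(μ)_{B_τ(y)}^{1/n}$. -/
def phi {n : ℕ} (ω : En n → ℝ) (y : En n) (τ : ℝ) : ℝ :=
  τ ^ 2 * (avgB (mu ω) y τ) ^ ((1 : ℝ) / n)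

/-- $Θ_Y(X) = \max\{|x-y|, φ_y^{-1}(s-t)\}$ (with $ψ$ a given inverse family). -/
def Theta {n : ℕ} (ψ : En n → ℝ → ℝ) (X Y : En n × ℝ) : ℝ :=
  max (dist X.1 Y.1) (ψ Y.1 (Y.2 - X.2))

/-- $\bar ρ_ω(X,Y)$ for $X.2 ≤ Y.2$. -/
def rhoBar {n : ℕ} (ω : En n → ℝ) (ψ : En n → ℝ → ℝ) (X Y : En n × ℝ) : ℝ :=
  Real.sqrt ((Theta ψ X Y) ^ 2 +
    min (dist X.1 Y.1 ^ 2)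
      ((avgB (mu ω) Y.1 (Theta ψ X Y)) ^ (-(1 : ℝ) / n) * (Y.2 - X.2)))

open Classical in
/-- The quasi-distance $ρ_ω$. -/
def rho {n : ℕ} (ω : En n → ℝ) (ψ : En n → ℝ → ℝ) (X Y : En n × ℝ) : ℝ :=
  if X = Y then 0 else if X.2 ≤ Y.2 then rhoBar ω ψ X Y else rhoBar ω ψ Y X

namespace RhoOmega

lemma sq_add_le_of_sq_add_sq_le {p q b d T m : ℝ} (hp : 0 ≤ p) (hq : 0 ≤ q) (hb : 0 ≤ b)
    (hd : 0 ≤ d) (hT : 0 ≤ T) (hTle : T ≤ p + d + b) (hbd : b ^ 2 + d ^ 2 ≤ q ^ 2)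
    (hm : m ≤ (p + q) ^ 2) :
    T ^ 2 + m ≤ (2 * (p + q)) ^ 2 := by
  have hbq : b ≤ q := by nlinarith
  have hdq : d ≤ q := by nlinarith
  nlinarith [mul_le_mul hTle hTle hT (by linarith), sq_nonneg (b - d)]

lemma sq_add_le_of_mul_le {p q d T m : ℝ} (hp : 0 ≤ p) (hd : 0 < d) (hdq : d ≤ q)
    (hq : q ^ 2 < 2 * d ^ 2) (hT : 0 ≤ T) (hTle : T ≤ p + 2 * d)
    (hm : d * m ≤ T * (d * p + (q ^ 2 - d ^ 2))) :
    T ^ 2 + m ≤ (2 * (p + q)) ^ 2 := by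
  have hr : 0 ≤ q ^ 2 - d ^ 2 := by nlinarith
  have h1 : T * (d * p + (q ^ 2 - d ^ 2)) ≤ (p + 2 * d) * (d * p + (q ^ 2 - d ^ 2)) :=
    mul_le_mul_of_nonneg_right hTle (by positivity)
  have h2 : T ^ 2 ≤ (p + 2 * d) ^ 2 := pow_le_pow_left₀ hT hTle 2
  refine le_of_mul_le_mul_left ?_ hd
  nlinarith [mul_nonneg hp hr, mul_nonneg hp (sub_nonneg.2 hdq), mul_nonneg hp hd.le]

variable {n : ℕ} {ω : En n → ℝ} {ψ : En n → ℝ → ℝ}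

def massRadius (ω : En n → ℝ) (y : En n) (τ : ℝ) : ℝ :=
  τ * avgB (mu ω) y τ ^ ((1 : ℝ) / n)

lemma phi_eq_mul_massRadius (y : En n) (τ : ℝ) : phi ω y τ = τ * massRadius ω y τ := by
  rw [phi, massRadius]; ring

def rhoBarSq (ω : En n → ℝ) (ψ : En n → ℝ → ℝ) (X Y : En n × ℝ) : ℝ :=
  Theta ψ X Y ^ 2 + min (dist X.1 Y.1 ^ 2)
    (Theta ψ X Y * (Y.2 - X.2) / massRadius ω Y.1 (Theta ψ X Y))

lemma theta_nonneg (X Y : En n × ℝ) : 0 ≤ Theta ψ X Y :=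
  dist_nonneg.trans (le_max_left _ _)

lemma rhoBarSq_le_two_mul_sq_theta (X Y : En n × ℝ) :
    rhoBarSq ω ψ X Y ≤ 2 * Theta ψ X Y ^ 2 := by
  have : dist X.1 Y.1 ^ 2 ≤ Theta ψ X Y ^ 2 := pow_le_pow_left₀ dist_nonneg (le_max_left _ _) 2
  unfold rhoBarSq
  linarith [min_le_left (dist X.1 Y.1 ^ 2)
    (Theta ψ X Y * (Y.2 - X.2) / massRadius ω Y.1 (Theta ψ X Y))]

section

variable (hμpos : ∀ᵐ x ∂(volume : Measure (En n)), 0 < mu ω x)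
include hμpos

lemma avgB_mu_nonneg (y : En n) (τ : ℝ) : 0 ≤ avgB (mu ω) y τ :=
  div_nonneg (integral_nonneg_of_ae (ae_restrict_of_ae (hμpos.mono fun _ hx => hx.le)))
    ENNReal.toReal_nonneg

lemma massRadius_nonneg (y : En n) {τ : ℝ} (hτ : 0 ≤ τ) : 0 ≤ massRadius ω y τ :=
  mul_nonneg hτ (Real.rpow_nonneg (avgB_mu_nonneg hμpos y τ) _)

lemma sq_theta_le_rhoBarSq {X Y : En n × ℝ} (h : X.2 ≤ Y.2) :
    Theta ψ X Y ^ 2 ≤ rhoBarSq ω ψ X Y := by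
  have hΘ := theta_nonneg (ψ := ψ) X Y
  have hκ := massRadius_nonneg hμpos (ω := ω) Y.1 hΘ
  have hΔ : 0 ≤ Y.2 - X.2 := sub_nonneg.2 h
  exact le_add_of_nonneg_right (by positivity)

variable (hn : 1 ≤ n)
include hn

lemma avgB_mu_rpow_neg (y : En n) (τ : ℝ) :
    avgB (mu ω) y τ ^ (-(1 : ℝ) / n) = τ / massRadius ω y τ := by
  rw [neg_div, Real.rpow_neg (avgB_mu_nonneg hμpos y τ), massRadius]
  rcases eq_or_ne τ 0 with rfl | hτ
  · have hn' : (n : ℝ)⁻¹ ≠ 0 := by positivity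
    simp [avgB, Real.zero_rpow hn']
  · exact (div_mul_cancel_left₀ hτ _).symm

lemma massRadius_eq (y : En n) {τ : ℝ} (hτ : 0 ≤ τ) :
    massRadius ω y τ =
      ((∫ x in ball y τ, mu ω x) / volume.real (ball (0 : En n) 1)) ^ ((1 : ℝ) / n) := by
  have hn' : (n : ℝ)⁻¹ ≠ 0 := by positivity
  rcases hτ.eq_or_lt with rfl | hτ
  · simp [massRadius, Real.zero_rpow hn']
  have hvol : volume.real (ball y τ) = τ ^ n * volume.real (ball (0 : En n) 1) := by
    rw [measureReal_def, measureReal_def, Measure.addHaar_ball_of_pos _ _ hτ,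
      ENNReal.toReal_mul, ENNReal.toReal_ofReal (by positivity), finrank_euclideanSpace_fin]
  have hroot : (τ ^ n) ^ ((1 : ℝ) / n) = τ := by
    rw [← Real.rpow_natCast, ← Real.rpow_mul hτ.le, mul_one_div_cancel (by positivity),
      Real.rpow_one]
  have hI : 0 ≤ (∫ x in ball y τ, mu ω x) / (τ ^ n * volume.real (ball (0 : En n) 1)) := by
    have := avgB_mu_nonneg hμpos y τ
    rwa [avgB, ← measureReal_def, hvol] at this
  rw [massRadius, avgB, ← measureReal_def, hvol]
  nth_rw 1 [← hroot]
  rw [← Real.mul_rpow (by positivity) hI, mul_div_left_comm, div_mul_cancel_left₀ (by positivity),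
    ← div_eq_mul_inv]

lemma rhoBar_eq_sqrt (X Y : En n × ℝ) : rhoBar ω ψ X Y = √(rhoBarSq ω ψ X Y) := by
  rw [rhoBar, rhoBarSq, avgB_mu_rpow_neg hμpos hn, div_mul_eq_mul_div]

lemma rhoBar_sq {X Y : En n × ℝ} (h : X.2 ≤ Y.2) : rhoBar ω ψ X Y ^ 2 = rhoBarSq ω ψ X Y := by
  rw [rhoBar_eq_sqrt hμpos hn, Real.sq_sqrt ((sq_nonneg _).trans (sq_theta_le_rhoBarSq hμpos h))]

lemma theta_le_rhoBar {X Y : En n × ℝ} (h : X.2 ≤ Y.2) : Theta ψ X Y ≤ rhoBar ω ψ X Y := by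
  rw [rhoBar_eq_sqrt hμpos hn]
  exact Real.le_sqrt_of_sq_le (sq_theta_le_rhoBarSq hμpos h)

variable (hμloc : LocallyIntegrable (mu ω))
include hμloc

lemma massRadius_le_massRadius {y z : En n} {σ τ : ℝ} (hσ : 0 ≤ σ) (h : σ + dist y z ≤ τ) :
    massRadius ω y σ ≤ massRadius ω z τ := by
  have hτ : 0 ≤ τ := by linarith [dist_nonneg (x := y) (y := z)]
  rw [massRadius_eq hμpos hn y hσ, massRadius_eq hμpos hn z hτ]
  have hmass : ∫ x in ball y σ, mu ω x ≤ ∫ x in ball z τ, mu ω x :=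
    setIntegral_mono_set (hμloc.integrableOn_isCompact (isCompact_closedBall z τ)
        |>.mono_set ball_subset_closedBall)
      (ae_restrict_of_ae (hμpos.mono fun _ hx => hx.le))
      (ball_subset_ball' h).eventuallyLE
  have hI : 0 ≤ ∫ x in ball y σ, mu ω x :=
    integral_nonneg_of_ae (ae_restrict_of_ae (hμpos.mono fun _ hx => hx.le))
  gcongr

lemma massRadius_pos (y : En n) {τ : ℝ} (hτ : 0 < τ) : 0 < massRadius ω y τ := by
  have hmass : 0 < ∫ x in ball y τ, mu ω x := by
    rw [setIntegral_pos_iff_support_of_nonneg_ae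
      (ae_restrict_of_ae (hμpos.mono fun _ hx => hx.le))
      (hμloc.integrableOn_isCompact (isCompact_closedBall y τ) |>.mono_set ball_subset_closedBall),
      inter_comm, measure_inter_conull (measure_mono_null (fun x hx => ?_) hμpos)]
    · exact measure_ball_pos _ _ hτ
    · simp_all
  rw [massRadius_eq hμpos hn y hτ.le]
  exact Real.rpow_pos_of_pos (div_pos hmass (ENNReal.toReal_pos (measure_ball_pos _ _ one_pos).ne'
    measure_ball_lt_top.ne)) _

lemma phi_le_phi {y z : En n} {σ τ : ℝ} (hσ : 0 ≤ σ) (h : σ + dist y z ≤ τ) :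
    phi ω y σ ≤ phi ω z τ := by
  have hστ : σ ≤ τ := by linarith [dist_nonneg (x := y) (y := z)]
  rw [phi_eq_mul_massRadius, phi_eq_mul_massRadius]
  exact mul_le_mul hστ (massRadius_le_massRadius hμpos hn hμloc hσ h)
    (massRadius_nonneg hμpos y hσ) (hσ.trans hστ)

lemma phi_lt_phi (y : En n) {σ τ : ℝ} (hσ : 0 ≤ σ) (hστ : σ < τ) : phi ω y σ < phi ω y τ := by
  rw [phi_eq_mul_massRadius, phi_eq_mul_massRadius]
  calc σ * massRadius ω y σ ≤ σ * massRadius ω y τ :=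
        mul_le_mul_of_nonneg_left
          (massRadius_le_massRadius hμpos hn hμloc hσ (by simpa using hστ.le)) hσ
    _ < τ * massRadius ω y τ :=
        mul_lt_mul_of_pos_right hστ (massRadius_pos hμpos hn hμloc y (hσ.trans_lt hστ))

lemma phi_add_le_phi_add (z : En n) {σ τ : ℝ} (hσ : 0 ≤ σ) (hτ : 0 ≤ τ) :
    phi ω z σ + phi ω z τ ≤ phi ω z (σ + τ) := by
  have hκσ := massRadius_le_massRadius hμpos hn hμloc (y := z) (z := z) (τ := σ + τ) hσ
    (by simpa using hτ)
  have hκτ := massRadius_le_massRadius hμpos hn hμloc (y := z) (z := z) (τ := σ + τ) hτ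
    (by simpa using hσ)
  rw [phi_eq_mul_massRadius, phi_eq_mul_massRadius, phi_eq_mul_massRadius, add_mul]
  gcongr

variable (hψ : ∀ (y : En n) (u : ℝ), 0 ≤ u → 0 ≤ ψ y u ∧ phi ω y (ψ y u) = u)
include hψ

lemma psi_le_of_le_phi {y : En n} {u τ : ℝ} (hu : 0 ≤ u) (hτ : 0 ≤ τ) (h : u ≤ phi ω y τ) :
    ψ y u ≤ τ := by
  by_contra! hlt
  have := phi_lt_phi hμpos hn hμloc y hτ hlt
  rw [(hψ y u hu).2] at this
  linarith

lemma psi_zero (y : En n) : ψ y 0 = 0 :=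
  le_antisymm (psi_le_of_le_phi hμpos hn hμloc hψ le_rfl le_rfl (by simp [phi]))
    (hψ y 0 le_rfl).1

lemma psi_mono (y : En n) {u v : ℝ} (hu : 0 ≤ u) (huv : u ≤ v) : ψ y u ≤ ψ y v :=
  psi_le_of_le_phi hμpos hn hμloc hψ hu (hψ y v (hu.trans huv)).1
    (by rwa [(hψ y v (hu.trans huv)).2])

lemma psi_add_le (y z : En n) {u v : ℝ} (hu : 0 ≤ u) (hv : 0 ≤ v) :
    ψ z (u + v) ≤ ψ y u + dist y z + ψ z v := by
  obtain ⟨hψu, hφu⟩ := hψ y u hu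
  obtain ⟨hψv, hφv⟩ := hψ z v hv
  refine psi_le_of_le_phi hμpos hn hμloc hψ (add_nonneg hu hv) (by positivity) ?_
  calc u + v = phi ω y (ψ y u) + phi ω z (ψ z v) := by rw [hφu, hφv]
    _ ≤ phi ω z (ψ y u + dist y z) + phi ω z (ψ z v) :=
        add_le_add_left (phi_le_phi hμpos hn hμloc hψu le_rfl) _
    _ ≤ phi ω z (ψ y u + dist y z + ψ z v) :=
        phi_add_le_phi_add hμpos hn hμloc z (by positivity) hψv

lemma rhoBar_self (X : En n × ℝ) : rhoBar ω ψ X X = 0 := by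
  simp [rhoBar_eq_sqrt hμpos hn, rhoBarSq, Theta, psi_zero hμpos hn hμloc hψ]

lemma rhoBar_comm_of_eq {X Y : En n × ℝ} (h : X.2 = Y.2) : rhoBar ω ψ X Y = rhoBar ω ψ Y X := by
  simp [rhoBar_eq_sqrt hμpos hn, rhoBarSq, Theta, h, psi_zero hμpos hn hμloc hψ, dist_comm]

lemma rho_of_le {X Y : En n × ℝ} (h : X.2 ≤ Y.2) : rho ω ψ X Y = rhoBar ω ψ X Y := by
  unfold rho
  split_ifs with hXY
  · rw [hXY, rhoBar_self hμpos hn hμloc hψ]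
  · rfl

lemma rho_of_ge {X Y : En n × ℝ} (h : Y.2 ≤ X.2) : rho ω ψ X Y = rhoBar ω ψ Y X := by
  unfold rho
  split_ifs with hXY hle
  · rw [hXY, rhoBar_self hμpos hn hμloc hψ]
  · exact rhoBar_comm_of_eq hμpos hn hμloc hψ (le_antisymm hle h)
  · rfl

lemma rho_comm (X Y : En n × ℝ) : rho ω ψ X Y = rho ω ψ Y X := by
  rcases le_total X.2 Y.2 with h | h
  · rw [rho_of_le hμpos hn hμloc hψ h, rho_of_ge hμpos hn hμloc hψ h]
  · rw [rho_of_ge hμpos hn hμloc hψ h, rho_of_le hμpos hn hμloc hψ h]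

lemma dist_le_rho (X Y : En n × ℝ) : dist X.1 Y.1 ≤ rho ω ψ X Y := by
  rcases le_total X.2 Y.2 with h | h
  · rw [rho_of_le hμpos hn hμloc hψ h]
    exact (le_max_left _ _).trans (theta_le_rhoBar hμpos hn h)
  · rw [rho_of_ge hμpos hn hμloc hψ h, dist_comm]
    exact (le_max_left _ _).trans (theta_le_rhoBar hμpos hn h)

lemma psi_le_rho {X Y : En n × ℝ} (h : X.2 ≤ Y.2) : ψ Y.1 (Y.2 - X.2) ≤ rho ω ψ X Y := by
  rw [rho_of_le hμpos hn hμloc hψ h]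
  exact (le_max_right _ _).trans (theta_le_rhoBar hμpos hn h)

lemma rho_le_two_mul_of_theta_le {X Y : En n × ℝ} (h : X.2 ≤ Y.2) {R : ℝ}
    (hR : Theta ψ X Y ≤ R) : rho ω ψ X Y ≤ 2 * R := by
  have hΘ := theta_nonneg (ψ := ψ) X Y
  rw [rho_of_le hμpos hn hμloc hψ h, rhoBar_eq_sqrt hμpos hn]
  refine Real.sqrt_le_iff.2 ⟨by linarith, ?_⟩
  nlinarith [rhoBarSq_le_two_mul_sq_theta (ω := ω) (ψ := ψ) X Y]

lemma theta_le_rho_add_rho {X Y Z : En n × ℝ} (hXZ : X.2 ≤ Z.2) (hY : Y.2 ≤ X.2 ∨ Z.2 ≤ Y.2) :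
    Theta ψ X Z ≤ rho ω ψ X Y + rho ω ψ Y Z := by
  have hp := dist_le_rho hμpos hn hμloc hψ X Y
  have hq := dist_le_rho hμpos hn hμloc hψ Y Z
  have hp0 := dist_nonneg.trans hp
  have hq0 := dist_nonneg.trans hq
  refine max_le (by linarith [dist_triangle X.1 Y.1 Z.1]) ?_
  rcases hY with hYX | hZY
  · calc ψ Z.1 (Z.2 - X.2) ≤ ψ Z.1 (Z.2 - Y.2) :=
          psi_mono hμpos hn hμloc hψ Z.1 (sub_nonneg.2 hXZ) (by linarith)
      _ ≤ rho ω ψ Y Z := psi_le_rho hμpos hn hμloc hψ (hYX.trans hXZ)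
      _ ≤ rho ω ψ X Y + rho ω ψ Y Z := by linarith
  · have hXY := hXZ.trans hZY
    obtain ⟨ha, hφa⟩ := hψ Y.1 (Y.2 - X.2) (sub_nonneg.2 hXY)
    refine psi_le_of_le_phi hμpos hn hμloc hψ (sub_nonneg.2 hXZ) (by positivity) ?_
    calc Z.2 - X.2 ≤ Y.2 - X.2 := by linarith
      _ = phi ω Y.1 (ψ Y.1 (Y.2 - X.2)) := hφa.symm
      _ ≤ phi ω Z.1 (rho ω ψ X Y + rho ω ψ Y Z) :=
          phi_le_phi hμpos hn hμloc ha (by linarith [psi_le_rho hμpos hn hμloc hψ hXY])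

lemma theta_le_of_le_of_le {X Y Z : En n × ℝ} (hXY : X.2 ≤ Y.2) (hYZ : Y.2 ≤ Z.2) :
    Theta ψ X Z ≤ rho ω ψ X Y + dist Y.1 Z.1 + ψ Z.1 (Z.2 - Y.2) := by
  have hp := dist_le_rho hμpos hn hμloc hψ X Y
  have hb := (hψ Z.1 _ (sub_nonneg.2 hYZ)).1
  refine max_le (by linarith [dist_triangle X.1 Y.1 Z.1]) ?_
  have := psi_add_le hμpos hn hμloc hψ Y.1 Z.1 (sub_nonneg.2 hXY) (sub_nonneg.2 hYZ)
  rw [sub_add_sub_cancel'] at this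
  linarith [psi_le_rho hμpos hn hμloc hψ hXY]

lemma rhoBarSq_eq_of_lt {X Y : En n × ℝ} (h : X.2 ≤ Y.2)
    (hlt : rhoBarSq ω ψ X Y < dist X.1 Y.1 ^ 2 + ψ Y.1 (Y.2 - X.2) ^ 2) :
    ψ Y.1 (Y.2 - X.2) < dist X.1 Y.1 ∧ rhoBarSq ω ψ X Y =
      dist X.1 Y.1 ^ 2 + dist X.1 Y.1 * (Y.2 - X.2) / massRadius ω Y.1 (dist X.1 Y.1) := by
  obtain ⟨hb, hφb⟩ := hψ Y.1 (Y.2 - X.2) (sub_nonneg.2 h)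
  set d := dist X.1 Y.1
  set b := ψ Y.1 (Y.2 - X.2)
  have hbd : b < d := by
    by_contra! hdb
    have hΘ : Theta ψ X Y = b := max_eq_right hdb
    have hsecond : b * (Y.2 - X.2) / massRadius ω Y.1 b = b ^ 2 := by
      rcases hb.eq_or_lt with hb0 | hb0
      · simp [← hb0]
      · rw [← hφb, phi_eq_mul_massRadius]
        field_simp [(massRadius_pos hμpos hn hμloc Y.1 hb0).ne']
    rw [rhoBarSq, hΘ, hsecond, min_eq_left (pow_le_pow_left₀ dist_nonneg hdb 2)] at hlt
    linarith
  have hΘ : Theta ψ X Y = d := max_eq_left hbd.le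
  refine ⟨hbd, ?_⟩
  rw [rhoBarSq, hΘ] at hlt ⊢
  rw [min_eq_right]
  by_contra! hgt
  rw [min_eq_left hgt.le] at hlt
  nlinarith [pow_lt_pow_left₀ hbd hb two_ne_zero]

lemma mul_min_le_of_le_of_le {X Y Z : En n × ℝ} (hXY : X.2 ≤ Y.2) (hYZ : Y.2 ≤ Z.2)
    (hT : rho ω ψ X Y + rho ω ψ Y Z < Theta ψ X Z) (hd : 0 < dist Y.1 Z.1) :
    dist Y.1 Z.1 * min (dist X.1 Z.1 ^ 2)
        (Theta ψ X Z * (Z.2 - X.2) / massRadius ω Z.1 (Theta ψ X Z)) ≤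
      Theta ψ X Z * (dist Y.1 Z.1 * rho ω ψ X Y +
        dist Y.1 Z.1 * (Z.2 - Y.2) / massRadius ω Z.1 (dist Y.1 Z.1)) := by
  obtain ⟨ha, hφa⟩ := hψ Y.1 (Y.2 - X.2) (sub_nonneg.2 hXY)
  set T := Theta ψ X Z
  set d := dist Y.1 Z.1
  set a := ψ Y.1 (Y.2 - X.2)
  have hap : a ≤ rho ω ψ X Y := psi_le_rho hμpos hn hμloc hψ hXY
  have hdq : d ≤ rho ω ψ Y Z := dist_le_rho hμpos hn hμloc hψ Y Z
  have hadT : a + d ≤ T := by linarith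
  have hκT : 0 < massRadius ω Z.1 T := massRadius_pos hμpos hn hμloc Z.1 (by linarith)
  have hκd : 0 < massRadius ω Z.1 d := massRadius_pos hμpos hn hμloc Z.1 hd
  have hu : Y.2 - X.2 ≤ a * massRadius ω Z.1 T := by
    rw [← hφa, phi_eq_mul_massRadius]
    exact mul_le_mul_of_nonneg_left (massRadius_le_massRadius hμpos hn hμloc ha hadT) ha
  have hκdT : massRadius ω Z.1 d ≤ massRadius ω Z.1 T :=
    massRadius_le_massRadius hμpos hn hμloc hd.le (by rw [dist_self, add_zero]; linarith)
  have hv : 0 ≤ Z.2 - Y.2 := sub_nonneg.2 hYZ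
  calc d * min (dist X.1 Z.1 ^ 2) (T * (Z.2 - X.2) / massRadius ω Z.1 T)
      ≤ d * (T * (Z.2 - X.2) / massRadius ω Z.1 T) :=
        mul_le_mul_of_nonneg_left (min_le_right _ _) hd.le
    _ = T * (d * ((Y.2 - X.2) / massRadius ω Z.1 T) + d * (Z.2 - Y.2) / massRadius ω Z.1 T) := by
        ring
    _ ≤ T * (d * a + d * (Z.2 - Y.2) / massRadius ω Z.1 d) := by
        gcongr
        · linarith
        · rwa [div_le_iff₀ hκT]
    _ ≤ T * (d * rho ω ψ X Y + d * (Z.2 - Y.2) / massRadius ω Z.1 d) := by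
        gcongr
        linarith

lemma rho_le_of_le_of_le {X Y Z : En n × ℝ} (hXY : X.2 ≤ Y.2) (hYZ : Y.2 ≤ Z.2) :
    rho ω ψ X Z ≤ 2 * (rho ω ψ X Y + rho ω ψ Y Z) := by
  have hXZ := hXY.trans hYZ
  by_cases hT : Theta ψ X Z ≤ rho ω ψ X Y + rho ω ψ Y Z
  · exact rho_le_two_mul_of_theta_le hμpos hn hμloc hψ hXZ hT
  push Not at hT
  have hp := dist_le_rho hμpos hn hμloc hψ X Y
  have hd := dist_le_rho hμpos hn hμloc hψ Y Z
  have hb := (hψ Z.1 _ (sub_nonneg.2 hYZ)).1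
  have hTle := theta_le_of_le_of_le hμpos hn hμloc hψ hXY hYZ
  have hq : rho ω ψ Y Z ^ 2 = rhoBarSq ω ψ Y Z := by
    rw [rho_of_le hμpos hn hμloc hψ hYZ, rhoBar_sq hμpos hn hYZ]
  have hm : min (dist X.1 Z.1 ^ 2) (Theta ψ X Z * (Z.2 - X.2) / massRadius ω Z.1 (Theta ψ X Z))
      ≤ (rho ω ψ X Y + rho ω ψ Y Z) ^ 2 :=
    (min_le_left _ _).trans (pow_le_pow_left₀ dist_nonneg
      (by linarith [dist_triangle X.1 Y.1 Z.1]) 2)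
  rw [rho_of_le hμpos hn hμloc hψ hXZ, rhoBar_eq_sqrt hμpos hn]
  refine Real.sqrt_le_iff.2 ⟨by linarith [dist_nonneg.trans hp, dist_nonneg.trans hd], ?_⟩
  rcases le_or_gt (ψ Z.1 (Z.2 - Y.2) ^ 2 + dist Y.1 Z.1 ^ 2) (rho ω ψ Y Z ^ 2) with hsmall | hlarge
  · exact sq_add_le_of_sq_add_sq_le (dist_nonneg.trans hp) (dist_nonneg.trans hd) hb dist_nonneg
      (theta_nonneg X Z) hTle hsmall hm
  · obtain ⟨hbd, hqd⟩ := rhoBarSq_eq_of_lt hμpos hn hμloc hψ hYZ (by linarith)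
    have hd0 : 0 < dist Y.1 Z.1 := hb.trans_lt hbd
    have hmul := mul_min_le_of_le_of_le hμpos hn hμloc hψ hXY hYZ hT hd0
    rw [← hq, ← sub_eq_iff_eq_add'] at hqd
    refine sq_add_le_of_mul_le (dist_nonneg.trans hp) hd0 hd ?_ (theta_nonneg X Z)
      (by linarith) (by rwa [hqd])
    nlinarith [pow_lt_pow_left₀ hbd hb two_ne_zero]

end

end RhoOmega

open RhoOmega

theorem stmt10_general {n : ℕ} (hn : 1 ≤ n) (ω : En n → ℝ)
    (hμloc : LocallyIntegrable (mu ω))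
    (hμpos : ∀ᵐ x ∂(volume : Measure (En n)), 0 < mu ω x)
    (ψ : En n → ℝ → ℝ)
    (hψ2 : ∀ (y : En n) (u : ℝ), 0 ≤ u → 0 ≤ ψ y u ∧ phi ω y (ψ y u) = u) :
    ∀ X Y Z : En n × ℝ, rho ω ψ X Z ≤ 2 * (rho ω ψ X Y + rho ω ψ Y Z) := by
  intro X Y Z
  wlog hXZ : X.2 ≤ Z.2 generalizing X Z
  · have := this Z X (le_of_not_ge hXZ)
    rwa [rho_comm hμpos hn hμloc hψ2 Z X, rho_comm hμpos hn hμloc hψ2 Z Y,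
      rho_comm hμpos hn hμloc hψ2 Y X, add_comm] at this
  by_cases hY : X.2 ≤ Y.2 ∧ Y.2 ≤ Z.2
  · exact rho_le_of_le_of_le hμpos hn hμloc hψ2 hY.1 hY.2
  · refine rho_le_two_mul_of_theta_le hμpos hn hμloc hψ2 hXZ
      (theta_le_rho_add_rho hμpos hn hμloc hψ2 hXZ ?_)
    rw [not_and_or, not_le, not_le] at hY
    exact hY.imp le_of_lt le_of_lt

/-- the quasi-triangle inequality
$ρ_ω(X,Z) ≤ 2[ρ_ω(X,Y) + ρ_ω(Y,Z)]$. -/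
theorem stmt10 {n : ℕ} (hn : 1 ≤ n) (ω : En n → ℝ)
    (hμloc : LocallyIntegrable (mu ω))
    (hμpos : ∀ᵐ x ∂(volume : Measure (En n)), 0 < mu ω x)
    (ψ : En n → ℝ → ℝ)
    (hψ1 : ∀ (y : En n) (τ : ℝ), 0 ≤ τ → ψ y (phi ω y τ) = τ)
    (hψ2 : ∀ (y : En n) (u : ℝ), 0 ≤ u → 0 ≤ ψ y u ∧ phi ω y (ψ y u) = u) :
    ∀ X Y Z : En n × ℝ, rho ω ψ X Z ≤ 2 * (rho ω ψ X Y + rho ω ψ Y Z) :=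
  stmt10_general hn ω hμloc hμpos ψ hψ2
end
end

section
/- (Radius growth in the inclusion lemma.) Let ω ∈ A_{1+1/n} with [ω]_{A_{1+1/n}} ≤ K₀ and μ = ω^{-n}. Fix r > 0, y ∈ ℝⁿ, and κ₀ > 0. Suppose r̃ > r satisfies μ(B_r(y))/μ(B_{r̃}(y)) = (2+κ₀)/(2+2κ₀). Then there exists η₀ = η₀(n,K₀,κ₀) > 0, independent of r, y, such that r̃ ≥ (1+η₀) r. Explicitly, one may take η₀ = [1 − (κ₀/(N(2+2κ₀)))^{1/λ₀}]^{-1/n} − 1, where N, λ₀ are the constants from the annulus comparison property of the A_{n+1} weight μ. -/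
open MeasureTheory Metric Set Filter

noncomputable section

/-!
The hypothesis on the ratio says that the annulus `B_r̃(y) \ B_r(y)` carries the fixed fraction
`κ₀/(2+2κ₀)` of the `μ`-mass of `B_r̃(y)`. The annulus comparison property turns this into the lower
bound `κ₀/(2+2κ₀) ≤ N (1 - (r/r̃)ⁿ)^λ` on the Lebesgue proportion of the annulus, and solving for
`r/r̃` gives `r/r̃ ≤ (1 - (κ₀/(N(2+2κ₀)))^{1/λ})^{1/n}`.
-/

theorem toReal_addHaar_ball_diff_ball_div {E : Type*} [NormedAddCommGroup E] [NormedSpace ℝ E]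
    [MeasurableSpace E] [BorelSpace E] [FiniteDimensional ℝ E] (μ : Measure E)
    [μ.IsAddHaarMeasure] (x : E) {r R : ℝ} (hr : 0 < r) (hrR : r ≤ R) :
    (μ (ball x R \ ball x r)).toReal / (μ (ball x R)).toReal
      = 1 - (r / R) ^ Module.finrank ℝ E := by
  have hR : 0 < R := hr.trans_le hrR
  have hunit_pos : 0 < (μ (ball (0 : E) 1)).toReal :=
    ENNReal.toReal_pos (measure_ball_pos μ _ one_pos).ne' measure_ball_lt_top.ne
  have hball : ∀ ρ : ℝ, 0 < ρ →
      (μ (ball x ρ)).toReal = ρ ^ Module.finrank ℝ E * (μ (ball (0 : E) 1)).toReal := by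
    intro ρ hρ
    rw [Measure.addHaar_ball_of_pos μ x hρ, ENNReal.toReal_mul,
      ENNReal.toReal_ofReal (by positivity)]
  have hsub : ball x r ⊆ ball x R := ball_subset_ball hrR
  rw [measure_sdiff hsub measurableSet_ball.nullMeasurableSet measure_ball_lt_top.ne,
    ENNReal.toReal_sub_of_le (measure_mono hsub) measure_ball_lt_top.ne, hball r hr, hball R hR,
    div_pow]
  have : (0 : ℝ) < R ^ Module.finrank ℝ E := by positivity
  field_simp

theorem le_rpow_one_div_of_pow_le {n : ℕ} {x c : ℝ} (hx : 0 ≤ x) (hc : c < 1)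
    (hxc : x ^ n ≤ c) : x ≤ c ^ ((1 : ℝ) / n) := by
  have hn : n ≠ 0 := by
    rintro rfl
    rw [pow_zero] at hxc
    linarith
  rw [one_div, Real.le_rpow_inv_iff_of_pos hx ((pow_nonneg hx n).trans hxc) (by positivity),
    Real.rpow_natCast]
  exact hxc

theorem rpow_neg_one_div_mul_le_of_le_mul_one_sub_pow_rpow {n : ℕ} {N lam a r R : ℝ}
    (ha : 0 < a) (hlam : 0 < lam) (hr : 0 < r) (hrR : r < R)
    (h : a ≤ N * (1 - (r / R) ^ n) ^ lam) :
    (1 - (a / N) ^ (1 / lam)) ^ (-(1 : ℝ) / n) * r ≤ R := by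
  have hR : 0 < R := hr.trans hrR
  have hx : 0 < r / R := div_pos hr hR
  have hv : 0 ≤ 1 - (r / R) ^ n := sub_nonneg.2 (pow_le_one₀ hx.le ((div_le_one hR).2 hrR.le))
  have hN : 0 < N := pos_of_mul_pos_left (ha.trans_le h) (by positivity)
  have ht : 0 < (a / N) ^ (1 / lam) := by positivity
  have hroot : (a / N) ^ (1 / lam) ≤ 1 - (r / R) ^ n := by
    rw [one_div, Real.rpow_inv_le_iff_of_pos (by positivity) hv hlam, div_le_iff₀' hN]
    exact h
  set c := 1 - (a / N) ^ (1 / lam)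
  have hxc : r / R ≤ c ^ ((1 : ℝ) / n) :=
    le_rpow_one_div_of_pow_le hx.le (by linarith) (by linarith)
  have hc : 0 < c ^ ((1 : ℝ) / n) := hx.trans_le hxc
  rw [neg_div, Real.rpow_neg (by linarith [pow_pos hx n]), inv_mul_le_iff₀ hc]
  rwa [div_le_iff₀ hR] at hxc

theorem stmt14_general {n : ℕ} (μ : En n → ℝ) (hμ : ∀ x, 0 ≤ μ x)
    (hμloc : LocallyIntegrable μ)
    (N lam : ℝ) (hlam : 0 < lam)
    (hann : ∀ (x₀ : En n) (R : ℝ), 0 < R → ∀ S : Set (En n), S ⊆ ball x₀ R →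
      MeasurableSet S →
      (∫ x in S, μ x) ≤
        N * ((volume S).toReal / (volume (ball x₀ R)).toReal) ^ lam *
          ∫ x in ball x₀ R, μ x)
    (y : En n) (r rt κ₀ : ℝ) (hκ : 0 < κ₀) (hr : 0 < r) (hrr : r < rt)
    (hratio : (∫ x in ball y r, μ x) / (∫ x in ball y rt, μ x)
      = (2 + κ₀) / (2 + 2 * κ₀)) :
    (1 + ((1 - (κ₀ / (N * (2 + 2 * κ₀))) ^ (1 / lam)) ^ (-(1 : ℝ) / n) - 1)) * r ≤ rt := by
  have hrt : 0 < rt := hr.trans hrr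
  set B := ∫ x in ball y rt, μ x
  have hB : 0 < B := by
    refine (setIntegral_nonneg measurableSet_ball fun x _ => hμ x).lt_of_ne' fun h => ?_
    rw [show B = 0 from h, div_zero] at hratio
    have : 0 < (2 + κ₀) / (2 + 2 * κ₀) := by positivity
    linarith
  have hannulus : (∫ x in ball y rt \ ball y r, μ x) = κ₀ / (2 + 2 * κ₀) * B := by
    rw [setIntegral_sdiff measurableSet_ball
      ((hμloc.integrableOn_isCompact (isCompact_closedBall y rt)).mono_set ball_subset_closedBall)
      (ball_subset_ball hrr.le), ← div_mul_cancel₀ (∫ x in ball y r, μ x) hB.ne', hratio]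
    field_simp
    ring
  have hfraction : κ₀ / (2 + 2 * κ₀) ≤ N * (1 - (r / rt) ^ n) ^ lam := by
    have h := hann y rt hrt (ball y rt \ ball y r) sdiff_subset
      (measurableSet_ball.diff measurableSet_ball)
    rwa [hannulus, toReal_addHaar_ball_diff_ball_div volume y hr hrr.le,
      finrank_euclideanSpace_fin, mul_le_mul_iff_of_pos_right hB] at h
  rw [add_sub_cancel, mul_comm N, ← div_div]
  exact rpow_neg_one_div_mul_le_of_le_mul_one_sub_pow_rpow (by positivity) hlam hr hrr hfraction

/-- radius growth in the inclusion lemma: if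
$μ(B_r(y))/μ(B_{r̃}(y)) = (2+κ₀)/(2+2κ₀)$ and $μ$ satisfies the annulus comparison
property with constants $N, lam$, then $r̃ ≥ (1+η₀) r$ with the explicit
$η₀ = [1 - (κ₀/(N(2+2κ₀)))^{1/lam}]^{-1/n} - 1$. -/
theorem stmt14 {n : ℕ} (hn : 1 ≤ n) (μ : En n → ℝ) (hμ : ∀ x, 0 ≤ μ x)
    (hμloc : LocallyIntegrable μ)
    (N lam : ℝ) (hN : 0 < N) (hlam : 0 < lam)
    (hann : ∀ (x₀ : En n) (R : ℝ), 0 < R → ∀ S : Set (En n), S ⊆ ball x₀ R →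
      MeasurableSet S →
      (∫ x in S, μ x) ≤
        N * ((volume S).toReal / (volume (ball x₀ R)).toReal) ^ lam *
          ∫ x in ball x₀ R, μ x)
    (y : En n) (r rt κ₀ : ℝ) (hκ : 0 < κ₀) (hr : 0 < r) (hrr : r < rt)
    (hratio : (∫ x in ball y r, μ x) / (∫ x in ball y rt, μ x)
      = (2 + κ₀) / (2 + 2 * κ₀)) :
    (1 + ((1 - (κ₀ / (N * (2 + 2 * κ₀))) ^ (1 / lam)) ^ (-(1 : ℝ) / n) - 1)) * r ≤ rt :=
  stmt14_general μ hμ hμloc N lam hlam hann y r rt κ₀ hκ hr hrr hratio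
end
end
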